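/- arXiv:2007.15063 — 2 statements merged into one kernel-verified Lean document; each statement's English description precedes it below -/
import Mathlib

section
/- Let p and q be real numbers with p < 0 and q < 0. Then there do not exist continuously differentiable functions f, g : ℝ → ℝ such that f(0) > 0, g(0) = 0, f(1) > 0, g(1) < 0, and for all r ∈ [0, 1] both f(r)·g′(r) − f′(r)·g(r) > 0 and p·f′(r) + q·g′(r) < 0. -/
/-!
Rotate coordinates by `u = p f + q g`, `v = q f - p g`. The symplectic condition makes `u`
decreasing, so `u < 0` on `[0, 1]` since `u 0 = p f 0 < 0`. The rotation multiplies the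
Wronskian by `-(p² + q²)`, so the contact condition makes `v / u` strictly decreasing. But
`(v / u) 0 = q / p`, and `(v / u) 1 < q / p` forces `(p² + q²) g 1 > 0`, contradicting `g 1 < 0`.
-/

open Set

theorem hasDerivAt_const_mul_add_const_mul {f g : ℝ → ℝ} {x : ℝ} (a b : ℝ)
    (hf : DifferentiableAt ℝ f x) (hg : DifferentiableAt ℝ g x) :
    HasDerivAt (fun r => a * f r + b * g r) (a * deriv f x + b * deriv g x) x :=
  (hf.hasDerivAt.const_mul a).add (hg.hasDerivAt.const_mul b)

theorem rotate_wronskian (p q f g f' g' : ℝ) :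
    (p * f + q * g) * (q * f' + -p * g') - (p * f' + q * g') * (q * f + -p * g) =
      -(p ^ 2 + q ^ 2) * (f * g' - f' * g) := by
  ring

theorem strictAntiOn_div_of_wronskian_neg {D : Set ℝ} (hD : Convex ℝ D) {u v : ℝ → ℝ}
    (hu : Differentiable ℝ u) (hv : Differentiable ℝ v) (hu0 : ∀ x ∈ D, u x ≠ 0)
    (hW : ∀ x ∈ interior D, u x * deriv v x - deriv u x * v x < 0) :
    StrictAntiOn (v / u) D := by
  refine strictAntiOn_of_deriv_neg hD
    (hv.continuous.continuousOn.div hu.continuous.continuousOn hu0) fun x hx => ?_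
  have hux := hu0 x (interior_subset hx)
  rw [((hv x).hasDerivAt.div (hu x).hasDerivAt hux).deriv]
  exact div_neg_of_neg_of_pos (by linarith [hW x hx]) (by positivity)

theorem stmt_1_general (p q : ℝ) (hp : p < 0) :
    ¬ ∃ (f g : ℝ → ℝ), ContDiff ℝ 1 f ∧ ContDiff ℝ 1 g ∧
      f 0 > 0 ∧ g 0 = 0 ∧ f 1 > 0 ∧ g 1 < 0 ∧
      (∀ r ∈ Set.Icc (0 : ℝ) 1,
        f r * deriv g r - deriv f r * g r > 0 ∧ p * deriv f r + q * deriv g r < 0) := by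
  rintro ⟨f, g, hf, hg, hf0, hg0, hf1, hg1, hcond⟩
  have hfd : Differentiable ℝ f := hf.differentiable one_ne_zero
  have hgd : Differentiable ℝ g := hg.differentiable one_ne_zero
  set u : ℝ → ℝ := fun r => p * f r + q * g r
  set v : ℝ → ℝ := fun r => q * f r + -p * g r
  have hu' (r : ℝ) := hasDerivAt_const_mul_add_const_mul p q (hfd r) (hgd r)
  have hv' (r : ℝ) := hasDerivAt_const_mul_add_const_mul q (-p) (hfd r) (hgd r)
  have hu_anti : AntitoneOn u (Icc 0 1) :=
    antitoneOn_of_deriv_nonpos (convex_Icc 0 1) (fun r _ => (hu' r).continuousAt.continuousWithinAt)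
      (fun r _ => (hu' r).differentiableAt.differentiableWithinAt) fun r hr => by
        rw [interior_Icc] at hr
        exact (hu' r).deriv ▸ (hcond r (Ioo_subset_Icc_self hr)).2.le
  have hu_neg (r : ℝ) (hr : r ∈ Icc (0 : ℝ) 1) : u r < 0 :=
    (hu_anti (left_mem_Icc.2 zero_le_one) hr hr.1).trans_lt (by simp only [u, hg0, mul_zero, add_zero]; nlinarith)
  have hψ : StrictAntiOn (v / u) (Icc 0 1) :=
    strictAntiOn_div_of_wronskian_neg (convex_Icc 0 1) (fun r => (hu' r).differentiableAt)
      (fun r => (hv' r).differentiableAt) (fun r hr => (hu_neg r hr).ne) fun r hr => by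
        rw [interior_Icc] at hr
        rw [(hu' r).deriv, (hv' r).deriv, rotate_wronskian]
        exact mul_neg_of_neg_of_pos (by nlinarith) (hcond r (Ioo_subset_Icc_self hr)).1
  have h01 := hψ (left_mem_Icc.2 zero_le_one) (right_mem_Icc.2 zero_le_one) zero_lt_one
  have hψ0 : (v / u) 0 = q / p := by
    simp only [Pi.div_apply, v, u, hg0, mul_zero, add_zero]
    exact mul_div_mul_right q p hf0.ne'
  rw [hψ0, Pi.div_apply, div_lt_iff_of_neg (hu_neg 1 (right_mem_Icc.2 zero_le_one)),
    div_mul_eq_mul_div, div_lt_iff_of_neg hp] at h01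
  simp only [u, v] at h01
  nlinarith [mul_pos (by nlinarith : 0 < p ^ 2 + q ^ 2) (neg_pos.2 hg1)]

/-- Case 3 of Section 5: for `p < 0` and `q < 0`, no pair of C¹ functions can satisfy the
contact condition, the symplectic condition, and the prescribed boundary values. -/
theorem stmt_1 (p q : ℝ) (hp : p < 0) (hq : q < 0) :
    ¬ ∃ (f g : ℝ → ℝ), ContDiff ℝ 1 f ∧ ContDiff ℝ 1 g ∧
      f 0 > 0 ∧ g 0 = 0 ∧ f 1 > 0 ∧ g 1 < 0 ∧
      (∀ r ∈ Set.Icc (0 : ℝ) 1,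
        f r * deriv g r - deriv f r * g r > 0 ∧ p * deriv f r + q * deriv g r < 0) :=
  stmt_1_general p q hp
end

section
/- Let f, g : ℝ → ℝ be continuously differentiable functions with f(0) > 0, g(0) = 0, f(1) > 0, g(1) < 0, and f(t)·g′(t) − f′(t)·g(t) > 0 for all t ∈ [0, 1]. Then there exist t₁, t₂ with 0 < t₁ < t₂ < 1 such that f(t₁) = 0 and g(t₁) > 0, and g(t₂) = 0 and f(t₂) < 0. -/
/-!
Where `g` vanishes, the contact condition reads `f g′ > 0`. At `t = 0` this gives `g′(0) > 0`,
so `g` becomes positive after `0`; since `g(1) < 0`, `g` has a first zero `t₂ ∈ (0, 1)`. As `g > 0`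
just before it, `g′(t₂) ≤ 0`, so the contact condition forces `f(t₂) < 0`.
As `f(0) > 0`, `f` vanishes at some `t₁ ∈ (0, t₂)`, where `g` is still positive.
-/

open Set Filter Topology SignType

section ZeroOfPosDeriv

variable {g : ℝ → ℝ} {x : ℝ}

lemma eventually_pos_nhdsGT_of_deriv_pos (hd : 0 < deriv g x) (hx : g x = 0) :
    ∀ᶠ y in 𝓝[>] x, 0 < g y := by
  filter_upwards [nhdsWithin_le_nhds (eventually_nhdsWithin_sign_eq_of_deriv_pos hd hx),
    self_mem_nhdsWithin] with y hsign (hxy : x < y)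
  rwa [sign_pos (sub_pos.mpr hxy), sign_eq_one_iff] at hsign

lemma eventually_neg_nhdsLT_of_deriv_pos (hd : 0 < deriv g x) (hx : g x = 0) :
    ∀ᶠ y in 𝓝[<] x, g y < 0 := by
  filter_upwards [nhdsWithin_le_nhds (eventually_nhdsWithin_sign_eq_of_deriv_pos hd hx),
    self_mem_nhdsWithin] with y hsign (hyx : y < x)
  rwa [sign_neg (sub_neg.mpr hyx), sign_eq_neg_one_iff] at hsign

lemma deriv_nonpos_of_eventually_pos_nhdsLT (hx : g x = 0) (hpos : ∀ᶠ y in 𝓝[<] x, 0 < g y) :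
    deriv g x ≤ 0 := by
  by_contra! hd
  obtain ⟨y, hy_pos, hy_neg⟩ := (hpos.and (eventually_neg_nhdsLT_of_deriv_pos hd hx)).exists
  exact hy_pos.not_gt hy_neg

end ZeroOfPosDeriv

lemma exists_first_zero_of_eventually_pos {g : ℝ → ℝ} {a b : ℝ} (hab : a < b)
    (hg : ContinuousOn g (Icc a b)) (hpos : ∀ᶠ t in 𝓝[>] a, 0 < g t) (hb : g b < 0) :
    ∃ c ∈ Ioo a b, g c = 0 ∧ ∀ t ∈ Ioo a c, 0 < g t := by
  obtain ⟨u, hau : a < u, hu⟩ := mem_nhdsGT_iff_exists_Ioo_subset.mp hpos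
  obtain ⟨δ, haδ, hδ⟩ := exists_between (lt_min hau hab)
  obtain ⟨hδu, hδb⟩ := lt_min_iff.mp hδ
  have hgδ : 0 < g δ := hu ⟨haδ, hδu⟩
  -- `g > 0` on `(a, δ]`, so the first zero of `g` after `a` is the least zero in `[δ, b]`
  set Z := Icc δ b ∩ g ⁻¹' {0}
  have hZ_closed : IsClosed Z :=
    (hg.mono (Icc_subset_Icc_left haδ.le)).preimage_isClosed_of_isClosed isClosed_Icc
      isClosed_singleton
  have hZ_bdd : BddBelow Z := ⟨δ, fun t ht => ht.1.1⟩
  have hZ_nonempty : Z.Nonempty :=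
    intermediate_value_Icc' hδb.le (hg.mono (Icc_subset_Icc_left haδ.le)) ⟨hb.le, hgδ.le⟩
  obtain ⟨⟨hδc, hcb⟩, hgc : g (sInf Z) = 0⟩ := hZ_closed.csInf_mem hZ_nonempty hZ_bdd
  refine ⟨sInf Z, ⟨haδ.trans_le hδc, hcb.lt_of_ne fun h => hb.ne (h ▸ hgc)⟩, hgc, ?_⟩
  rintro t ⟨hat, htc⟩
  rcases lt_or_ge t δ with htδ | hδt
  · exact hu ⟨hat, htδ.trans hδu⟩
  by_contra! hgt
  obtain ⟨s, ⟨hδs, hst⟩, hgs⟩ := intermediate_value_Icc' hδt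
    (hg.mono (Icc_subset_Icc haδ.le (htc.le.trans hcb))) ⟨hgt, hgδ.le⟩
  have hsZ : s ∈ Z := ⟨⟨hδs, hst.trans (htc.le.trans hcb)⟩, hgs⟩
  exact (csInf_le hZ_bdd hsZ).not_gt (hst.trans_lt htc)

theorem stmt_2_general (f g : ℝ → ℝ) (hf : ContDiff ℝ 1 f) (hg : ContDiff ℝ 1 g)
    (h0f : f 0 > 0) (h0g : g 0 = 0) (h1g : g 1 < 0)
    (hcontact : ∀ t ∈ Set.Icc (0 : ℝ) 1, f t * deriv g t - deriv f t * g t > 0) :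
    ∃ t₁ t₂ : ℝ, 0 < t₁ ∧ t₁ < t₂ ∧ t₂ < 1 ∧
      f t₁ = 0 ∧ g t₁ > 0 ∧ g t₂ = 0 ∧ f t₂ < 0 := by
  have contact_at_zero : ∀ t ∈ Icc (0 : ℝ) 1, g t = 0 → 0 < f t * deriv g t := fun t ht hgt => by
    simpa [hgt] using hcontact t ht
  have hg'0 : 0 < deriv g 0 :=
    pos_of_mul_pos_right (contact_at_zero 0 (left_mem_Icc.mpr zero_le_one) h0g) h0f.le
  obtain ⟨t₂, ⟨ht₂0, ht₂1⟩, hgt₂, hg_pos⟩ := exists_first_zero_of_eventually_pos zero_lt_one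
    hg.continuous.continuousOn (eventually_pos_nhdsGT_of_deriv_pos hg'0 h0g) h1g
  have hg't₂ : deriv g t₂ ≤ 0 := deriv_nonpos_of_eventually_pos_nhdsLT hgt₂
    (mem_of_superset (Ioo_mem_nhdsLT ht₂0) hg_pos)
  have hft₂ : f t₂ < 0 :=
    neg_of_mul_pos_left (contact_at_zero t₂ ⟨ht₂0.le, ht₂1.le⟩ hgt₂) hg't₂
  obtain ⟨t₁, ht₁, hft₁⟩ :=
    intermediate_value_Ioo' ht₂0.le hf.continuous.continuousOn ⟨hft₂, h0f⟩
  exact ⟨t₁, t₂, ht₁.1, ht₁.2, ht₂1, hft₁, hg_pos t₁ ht₁, hgt₂, hft₂⟩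

/-- A plane curve `(f, g)` satisfying the contact condition `f g′ − f′ g > 0` on `[0,1]`
that starts on the positive x-axis and ends in the open fourth quadrant must first cross
the positive y-axis and then the negative x-axis. -/
theorem stmt_2 (f g : ℝ → ℝ) (hf : ContDiff ℝ 1 f) (hg : ContDiff ℝ 1 g)
    (h0f : f 0 > 0) (h0g : g 0 = 0) (h1f : f 1 > 0) (h1g : g 1 < 0)
    (hcontact : ∀ t ∈ Set.Icc (0 : ℝ) 1, f t * deriv g t - deriv f t * g t > 0) :
    ∃ t₁ t₂ : ℝ, 0 < t₁ ∧ t₁ < t₂ ∧ t₂ < 1 ∧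
      f t₁ = 0 ∧ g t₁ > 0 ∧ g t₂ = 0 ∧ f t₂ < 0 :=
  stmt_2_general f g hf hg h0f h0g h1g hcontact
end
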